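/- arXiv:2001.00983 — 3 statements merged into one kernel-verified Lean document; each statement's English description precedes it below -/
import Mathlib

section
/- For ASVD1 with Λ = {n : σₙ > ε, |⟨y,vₙ⟩|/σₙ ≤ c‖y‖}, if m ∈ I_N∖Λ with σₘ > ε, then for every z ∈ ℂᴺ with ‖z‖ < c‖y‖ one has √σₘ ≤ ‖f − T_N z‖/(c‖y‖ − ‖z‖). -/
/-!
Let `u` be a unit eigenvector of `T* T` with eigenvalue `s > 0`, so that `‖T u‖ = √s`,
`⟪T u, T w⟫ = s ⟪u, w⟫` and `⟪T u, f⟫ = ⟪u, T* f⟫`. Testing `f - T z` against `T u` gives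
`|⟪u, T* f⟫| - s ‖z‖ ≤ |⟪T u, f - T z⟫| ≤ √s ‖f - T z‖`; for `m ∉ Λ` the left side exceeds
`s (c ‖y‖ - ‖z‖)`.
-/

open scoped ComplexInnerProductSpace

open Matrix

section

variable {𝕜 E H : Type*} [RCLike 𝕜]
  [NormedAddCommGroup E] [InnerProductSpace 𝕜 E] [NormedAddCommGroup H] [InnerProductSpace 𝕜 H]

theorem norm_apply_eq_sqrt_of_inner_apply_eq {T : E → H} {u : E} (hu : ‖u‖ = 1) {s : ℝ}
    (hTT : ∀ w, inner 𝕜 (T u) (T w) = (s : 𝕜) * inner 𝕜 u w) :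
    ‖T u‖ = √s := by
  have hself : (‖T u‖ ^ 2 : 𝕜) = s := by
    rw [← inner_self_eq_norm_sq_to_K, hTT, inner_self_eq_norm_sq_to_K, hu]
    simp
  rw [← Real.sqrt_sq (norm_nonneg (T u))]
  exact congrArg Real.sqrt (by exact_mod_cast hself)

theorem sqrt_mul_sub_norm_le_norm_sub {T : E → H} {u : E} (hu : ‖u‖ = 1) {s : ℝ} (hs : 0 < s)
    (hTT : ∀ w, inner 𝕜 (T u) (T w) = (s : 𝕜) * inner 𝕜 u w)
    {f : H} {y : E} (hTf : inner 𝕜 (T u) f = inner 𝕜 u y) (z : E) :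
    √s * (‖inner 𝕜 u y‖ / s - ‖z‖) ≤ ‖f - T z‖ := by
  have hlower : ‖inner 𝕜 u y‖ - s * ‖z‖ ≤ ‖inner 𝕜 (T u) (f - T z)‖ := by
    have hz : ‖(s : 𝕜) * inner 𝕜 u z‖ ≤ s * ‖z‖ := by
      rw [norm_mul, RCLike.norm_ofReal, abs_of_pos hs]
      gcongr
      simpa [hu] using norm_inner_le_norm (𝕜 := 𝕜) u z
    rw [inner_sub_right, hTf, hTT]
    linarith [norm_sub_norm_le (inner 𝕜 u y) ((s : 𝕜) * inner 𝕜 u z)]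
  have hupper : ‖inner 𝕜 (T u) (f - T z)‖ ≤ √s * ‖f - T z‖ := by
    rw [← norm_apply_eq_sqrt_of_inner_apply_eq hu hTT]
    exact norm_inner_le_norm _ _
  have hsqrt : 0 < √s := Real.sqrt_pos.mpr hs
  refine le_of_mul_le_mul_left ?_ hsqrt
  calc √s * (√s * (‖inner 𝕜 u y‖ / s - ‖z‖))
      = ‖inner 𝕜 u y‖ - s * ‖z‖ := by
        rw [← mul_assoc, Real.mul_self_sqrt hs.le]; field_simp
    _ ≤ √s * ‖f - T z‖ := hlower.trans hupper

end

section

variable {𝕜 H ι : Type*} [RCLike 𝕜] [NormedAddCommGroup H] [InnerProductSpace 𝕜 H] [Fintype ι]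

theorem inner_sum_smul_sum_smul_of_gram_mulVec_eq {φ : ι → H} {u : EuclideanSpace 𝕜 ι} {s : ℝ}
    (hu : gram 𝕜 φ *ᵥ u = (s : 𝕜) • ⇑u) (w : EuclideanSpace 𝕜 ι) :
    inner 𝕜 (∑ i, u i • φ i) (∑ i, w i • φ i) = (s : 𝕜) * inner 𝕜 u w := by
  have hstar : star ⇑u ᵥ* gram 𝕜 φ = (s : 𝕜) • star ⇑u := by
    conv_lhs => rw [← (isHermitian_gram 𝕜 φ).eq]
    rw [← star_mulVec, hu, star_smul, RCLike.star_def, RCLike.conj_ofReal]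
  rw [← star_dotProduct_gram_mulVec, dotProduct_mulVec, hstar, smul_dotProduct,
    EuclideanSpace.inner_eq_star_dotProduct, dotProduct_comm, smul_eq_mul]

theorem inner_sum_smul_left_eq_inner {φ : ι → H} {f : H} {y : EuclideanSpace 𝕜 ι}
    (hy : ∀ i, y i = inner 𝕜 (φ i) f) (u : EuclideanSpace 𝕜 ι) :
    inner 𝕜 (∑ i, u i • φ i) f = inner 𝕜 u y := by
  simp only [sum_inner, inner_smul_left, PiLp.inner_apply, RCLike.inner_apply, hy, mul_comm]

end

theorem stmt_11_general {H : Type*} [NormedAddCommGroup H] [InnerProductSpace ℂ H]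
    {N : ℕ} (φ : Fin N → H) (σ : Fin N → ℝ)
    (v : Fin N → EuclideanSpace ℂ (Fin N)) (hv : Orthonormal ℂ v)
    (G : Matrix (Fin N) (Fin N) ℂ) (hG : ∀ m k, G m k = ⟪φ m, φ k⟫)
    (heig : ∀ n i, G.mulVec (fun j => v n j) i = (σ n : ℂ) * v n i)
    (T : EuclideanSpace ℂ (Fin N) → H) (hT : ∀ z, T z = ∑ n, z n • φ n)
    (ε c : ℝ) (hε : 0 < ε)
    (f : H) (y : EuclideanSpace ℂ (Fin N)) (hy : ∀ n, y n = ⟪φ n, f⟫)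
    (m : Fin N) (hmσ : ε < σ m)
    (hm : m ∉ Finset.univ.filter
      (fun n => ε < σ n ∧ ‖⟪v n, y⟫‖ / σ n ≤ c * ‖y‖))
    (z : EuclideanSpace ℂ (Fin N)) (hz : ‖z‖ < c * ‖y‖) :
    Real.sqrt (σ m) ≤ ‖f - T z‖ / (c * ‖y‖ - ‖z‖) := by
  have hσm : 0 < σ m := hε.trans hmσ
  have hGram : G = gram ℂ φ := Matrix.ext hG
  have hTT : ∀ w, ⟪T (v m), T w⟫ = (σ m : ℂ) * ⟪v m, w⟫ := fun w => by
    rw [hT, hT]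
    exact inner_sum_smul_sum_smul_of_gram_mulVec_eq (by rw [← hGram]; exact funext (heig m)) w
  have hTf : ⟪T (v m), f⟫ = ⟪v m, y⟫ := by rw [hT]; exact inner_sum_smul_left_eq_inner hy _
  have hlarge : c * ‖y‖ < ‖⟪v m, y⟫‖ / σ m := by
    simpa [hmσ] using hm
  rw [le_div_iff₀ (by linarith)]
  calc √(σ m) * (c * ‖y‖ - ‖z‖)
      ≤ √(σ m) * (‖⟪v m, y⟫‖ / σ m - ‖z‖) := by gcongr
    _ ≤ ‖f - T z‖ := sqrt_mul_sub_norm_le_norm_sub (hv.1 m) hσm hTT hTf z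

theorem stmt_11 {H : Type*} [NormedAddCommGroup H] [InnerProductSpace ℂ H]
    {N : ℕ} (φ : Fin N → H) (σ : Fin N → ℝ)
    (v : Fin N → EuclideanSpace ℂ (Fin N)) (hv : Orthonormal ℂ v)
    (G : Matrix (Fin N) (Fin N) ℂ) (hG : ∀ m k, G m k = ⟪φ m, φ k⟫)
    (heig : ∀ n i, G.mulVec (fun j => v n j) i = (σ n : ℂ) * v n i)
    (T : EuclideanSpace ℂ (Fin N) → H) (hT : ∀ z, T z = ∑ n, z n • φ n)
    (ξ : Fin N → H) (hξ : ∀ n, ξ n = T (v n))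
    (hσ : ∀ n, 0 ≤ σ n) (ε c : ℝ) (hε : 0 < ε) (hc : 0 < c)
    (f : H) (y : EuclideanSpace ℂ (Fin N)) (hy : ∀ n, y n = ⟪φ n, f⟫)
    (m : Fin N) (hmσ : ε < σ m)
    (hm : m ∉ Finset.univ.filter
      (fun n => ε < σ n ∧ ‖⟪v n, y⟫‖ / σ n ≤ c * ‖y‖))
    (z : EuclideanSpace ℂ (Fin N)) (hz : ‖z‖ < c * ‖y‖) :
    Real.sqrt (σ m) ≤ ‖f - T z‖ / (c * ‖y‖ - ‖z‖) :=
  stmt_11_general φ σ v hv G hG heig T hT ε c hε f y hy m hmσ hm z hz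
end

section
/- Suppose f ∈ H has the (a,δ)-stable approximation property: there exists z ∈ ℂᴺ with ‖f − T_N z‖ ≤ δ‖f‖ and ‖z‖ ≤ a‖f‖, where 0 < δ < 1, a > 0. Then the TSVD approximation with threshold ε satisfies ‖f − P_Λ f‖ ≤ (δ + a√ε)‖f‖. -/
/-!
The vectors `ξ n = T_N v n` are pairwise orthogonal with `‖ξ n‖² = σ n`, because `v n` are
orthonormal eigenvectors of the Gram matrix. Hence `P_Λ` is the orthogonal projection onto
`span {ξ n | n ∈ Λ}`, and `‖f - P_Λ f‖` is at most the distance from `f` to any point of that span.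
Expanding `z = ∑ c n • v n` gives `T_N z = ∑ c n • ξ n`; its part `w` over `Λ` lies in the span and
`‖T_N z - w‖² = ∑_{n ∉ Λ} |c n|² σ n ≤ ε ‖z‖²`, so `‖f - w‖ ≤ ‖f - T_N z‖ + √ε ‖z‖`.
-/

open scoped InnerProductSpace

open Finset Matrix Submodule

section OrthogonalFamily

variable {𝕜 E ι : Type*} [RCLike 𝕜] [NormedAddCommGroup E] [InnerProductSpace 𝕜 E]
  {ξ : ι → E}

theorem norm_sum_smul_sq_of_pairwise_inner_eq_zero
    (hξ : Pairwise fun m n => ⟪ξ m, ξ n⟫_𝕜 = 0) (s : Finset ι) (c : ι → 𝕜) :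
    ‖∑ n ∈ s, c n • ξ n‖ ^ 2 = ∑ n ∈ s, ‖c n‖ ^ 2 * ‖ξ n‖ ^ 2 := by
  classical
  induction s using Finset.induction_on with
  | empty => simp
  | insert a s ha ih =>
    have horth : ⟪c a • ξ a, ∑ n ∈ s, c n • ξ n⟫_𝕜 = 0 := by
      simp only [inner_sum, inner_smul_left, inner_smul_right]
      exact sum_eq_zero fun n hn => by rw [hξ (ne_of_mem_of_not_mem hn ha).symm]; ring
    rw [sum_insert ha, sum_insert ha, @norm_add_sq 𝕜, horth, ih, norm_smul, mul_pow]
    simp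

theorem inner_sum_smul_of_pairwise_inner_eq_zero
    (hξ : Pairwise fun m n => ⟪ξ m, ξ n⟫_𝕜 = 0) {s : Finset ι} (c : ι → 𝕜) {m : ι}
    (hm : m ∈ s) : ⟪ξ m, ∑ n ∈ s, c n • ξ n⟫_𝕜 = c m * ⟪ξ m, ξ m⟫_𝕜 := by
  simp only [inner_sum, inner_smul_right]
  exact sum_eq_single_of_mem m hm fun n _ hnm => by rw [hξ hnm.symm, mul_zero]

-- A vanishing `ξ n` contributes nothing on either side, thanks to `x / 0 = 0`.
theorem starProjection_span_eq_sum_of_pairwise_inner_eq_zero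
    (hξ : Pairwise fun m n => ⟪ξ m, ξ n⟫_𝕜 = 0) (s : Finset ι)
    [(span 𝕜 (ξ '' s)).HasOrthogonalProjection] (x : E) :
    (span 𝕜 (ξ '' s)).starProjection x = ∑ n ∈ s, (⟪ξ n, x⟫_𝕜 / ⟪ξ n, ξ n⟫_𝕜) • ξ n := by
  refine eq_starProjection_of_mem_of_inner_eq_zero
    (sum_mem fun n hn => smul_mem _ _ (subset_span ⟨n, hn, rfl⟩)) fun w hw => ?_
  rw [← mem_orthogonal_singleton_iff_inner_right]
  refine span_le.mpr ?_ hw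
  rintro _ ⟨m, hm, rfl⟩
  rw [SetLike.mem_coe, mem_orthogonal_singleton_iff_inner_right, inner_eq_zero_symm,
    inner_sub_right, inner_sum_smul_of_pairwise_inner_eq_zero hξ _ hm,
    div_mul_cancel_of_imp fun h => by rw [inner_self_eq_zero.mp h, inner_zero_left], sub_self]

theorem norm_sum_smul_sub_sum_smul_le [Fintype ι]
    (hξ : Pairwise fun m n => ⟪ξ m, ξ n⟫_𝕜 = 0) (s : Finset ι) (c : ι → 𝕜) {ε : ℝ}
    (hε : 0 ≤ ε) (hs : ∀ n ∉ s, ‖ξ n‖ ^ 2 ≤ ε) :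
    ‖∑ n, c n • ξ n - ∑ n ∈ s, c n • ξ n‖ ≤ √ε * √(∑ n, ‖c n‖ ^ 2) := by
  classical
  rw [← Real.sqrt_mul hε, Real.le_sqrt (norm_nonneg _) (by positivity), ← sum_compl_add_sum s,
    add_sub_cancel_right, norm_sum_smul_sq_of_pairwise_inner_eq_zero hξ, mul_sum]
  calc ∑ n ∈ sᶜ, ‖c n‖ ^ 2 * ‖ξ n‖ ^ 2 ≤ ∑ n ∈ sᶜ, ε * ‖c n‖ ^ 2 :=
        sum_le_sum fun n hn => by
          rw [mul_comm]
          exact mul_le_mul_of_nonneg_right (hs n (mem_compl.mp hn)) (sq_nonneg _)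
    _ ≤ ∑ n, ε * ‖c n‖ ^ 2 :=
        sum_le_sum_of_subset_of_nonneg (subset_univ _) fun _ _ _ => by positivity

end OrthogonalFamily

theorem Submodule.norm_sub_starProjection_le {𝕜 E : Type*} [RCLike 𝕜] [NormedAddCommGroup E]
    [InnerProductSpace 𝕜 E] {K : Submodule 𝕜 E} [K.HasOrthogonalProjection] (x : E) {w : E}
    (hw : w ∈ K) : ‖x - K.starProjection x‖ ≤ ‖x - w‖ := by
  rw [starProjection_minimal]
  exact ciInf_le ⟨0, Set.forall_mem_range.mpr fun _ => norm_nonneg _⟩ (⟨w, hw⟩ : K)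

section Synthesis

variable {𝕜 E ι κ : Type*} [RCLike 𝕜] [NormedAddCommGroup E] [InnerProductSpace 𝕜 E]
  [Fintype ι]

theorem Orthonormal.inner_sum_smul_eq_ite_of_gram_mulVec [DecidableEq κ] {φ : ι → E}
    {v : κ → EuclideanSpace 𝕜 ι} (hv : Orthonormal 𝕜 v) {σ : κ → 𝕜}
    (heig : ∀ n, gram 𝕜 φ *ᵥ v n = σ n • v n) (m n : κ) :
    ⟪∑ i, v m i • φ i, ∑ i, v n i • φ i⟫_𝕜 = if m = n then σ n else 0 := by
  rw [← star_dotProduct_gram_mulVec, heig, dotProduct_smul, dotProduct_comm,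
    ← EuclideanSpace.inner_eq_star_dotProduct, orthonormal_iff_ite.mp hv]
  split_ifs <;> simp

theorem OrthonormalBasis.sum_smul_eq_sum_inner_smul [Fintype κ]
    (b : OrthonormalBasis κ 𝕜 (EuclideanSpace 𝕜 ι)) (φ : ι → E) (z : EuclideanSpace 𝕜 ι) :
    ∑ i, z i • φ i = ∑ n, ⟪b n, z⟫_𝕜 • ∑ i, b n i • φ i := by
  let L : EuclideanSpace 𝕜 ι →ₗ[𝕜] E :=
    Fintype.linearCombination 𝕜 φ ∘ₗ (WithLp.linearEquiv 2 𝕜 (ι → 𝕜)).toLinearMap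
  have hL : ∀ x : EuclideanSpace 𝕜 ι, ∑ i, x i • φ i = L x := fun x =>
    (Fintype.linearCombination_apply 𝕜 φ x.ofLp).symm
  simp only [hL]
  conv_lhs => rw [← b.sum_repr' z, map_sum]
  simp only [map_smul]

end Synthesis

open scoped ComplexInnerProductSpace

theorem stmt_14_general {H : Type*} [NormedAddCommGroup H] [InnerProductSpace ℂ H]
    {N : ℕ} (φ : Fin N → H) (σ : Fin N → ℝ)
    (v : Fin N → EuclideanSpace ℂ (Fin N)) (hv : Orthonormal ℂ v)
    (G : Matrix (Fin N) (Fin N) ℂ) (hG : ∀ m k, G m k = ⟪φ m, φ k⟫)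
    (heig : ∀ n i, G.mulVec (fun j => v n j) i = (σ n : ℂ) * v n i)
    (T : EuclideanSpace ℂ (Fin N) → H) (hT : ∀ z, T z = ∑ n, z n • φ n)
    (ξ : Fin N → H) (hξ : ∀ n, ξ n = T (v n))
    (ε : ℝ) (hε : 0 < ε)
    (f : H) (a δ : ℝ)
    (hstable : ∃ z : EuclideanSpace ℂ (Fin N),
      ‖f - T z‖ ≤ δ * ‖f‖ ∧ ‖z‖ ≤ a * ‖f‖) :
    ‖f - ∑ n ∈ Finset.univ.filter (fun n => ε < σ n),
        (⟪ξ n, f⟫ / (σ n : ℂ)) • ξ n‖ ≤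
      (δ + a * Real.sqrt ε) * ‖f‖ := by
  classical
  obtain ⟨z, hfz, hz⟩ := hstable
  obtain ⟨b, rfl⟩ : ∃ b : OrthonormalBasis (Fin N) ℂ (EuclideanSpace ℂ (Fin N)), ⇑b = v :=
    ⟨.mk hv (by rw [hv.linearIndependent.span_eq_top_of_card_eq_finrank' (by simp)]), by simp⟩
  have hξT : ∀ n, ξ n = ∑ i, b n i • φ i := fun n => (hξ n).trans (hT _)
  have hinner : ∀ m n, ⟪ξ m, ξ n⟫ = if m = n then (σ n : ℂ) else 0 := by
    have hGram : G = gram ℂ φ := Matrix.ext hG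
    simp only [hξT]
    exact hv.inner_sum_smul_eq_ite_of_gram_mulVec fun n => funext fun i => by
      rw [← hGram]; exact heig n i
  have horth : Pairwise fun m n => ⟪ξ m, ξ n⟫ = 0 := fun m n hmn => (hinner m n).trans (if_neg hmn)
  have hσξ : ∀ n, (σ n : ℂ) = ⟪ξ n, ξ n⟫ := fun n => by rw [hinner, if_pos rfl]
  have hnorm : ∀ n, ‖ξ n‖ ^ 2 = σ n := fun n => by
    rw [← inner_self_eq_norm_sq (𝕜 := ℂ), ← hσξ, RCLike.re_to_complex, Complex.ofReal_re]
  set Λ := Finset.univ.filter fun n => ε < σ n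
  have : FiniteDimensional ℂ (span ℂ (ξ '' Λ)) :=
    FiniteDimensional.span_of_finite ℂ (Λ.finite_toSet.image ξ)
  have hP : ∑ n ∈ Λ, (⟪ξ n, f⟫ / (σ n : ℂ)) • ξ n = (span ℂ (ξ '' Λ)).starProjection f := by
    simp only [starProjection_span_eq_sum_of_pairwise_inner_eq_zero horth, hσξ]
  have hTz : T z = ∑ n, ⟪b n, z⟫ • ξ n := by
    rw [hT, b.sum_smul_eq_sum_inner_smul]
    simp only [hξT]
  have htail : ‖T z - ∑ n ∈ Λ, ⟪b n, z⟫ • ξ n‖ ≤ √ε * ‖z‖ := by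
    rw [hTz, ← Real.sqrt_sq (norm_nonneg z), ← b.sum_sq_norm_inner_right z]
    exact norm_sum_smul_sub_sum_smul_le horth Λ _ hε.le fun n hn => by simpa [Λ, hnorm] using hn
  rw [hP]
  calc ‖f - (span ℂ (ξ '' Λ)).starProjection f‖ ≤ ‖f - ∑ n ∈ Λ, ⟪b n, z⟫ • ξ n‖ :=
        norm_sub_starProjection_le f
          (sum_mem fun n hn => smul_mem _ _ (subset_span ⟨n, hn, rfl⟩))
    _ ≤ ‖f - T z‖ + ‖T z - ∑ n ∈ Λ, ⟪b n, z⟫ • ξ n‖ := norm_sub_le_norm_sub_add_norm_sub _ _ _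
    _ ≤ δ * ‖f‖ + √ε * (a * ‖f‖) := by gcongr; exact htail.trans (by gcongr)
    _ = (δ + a * √ε) * ‖f‖ := by ring

theorem stmt_14 {H : Type*} [NormedAddCommGroup H] [InnerProductSpace ℂ H]
    {N : ℕ} (φ : Fin N → H) (σ : Fin N → ℝ)
    (v : Fin N → EuclideanSpace ℂ (Fin N)) (hv : Orthonormal ℂ v)
    (G : Matrix (Fin N) (Fin N) ℂ) (hG : ∀ m k, G m k = ⟪φ m, φ k⟫)
    (heig : ∀ n i, G.mulVec (fun j => v n j) i = (σ n : ℂ) * v n i)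
    (T : EuclideanSpace ℂ (Fin N) → H) (hT : ∀ z, T z = ∑ n, z n • φ n)
    (ξ : Fin N → H) (hξ : ∀ n, ξ n = T (v n))
    (hσ : ∀ n, 0 ≤ σ n) (ε : ℝ) (hε : 0 < ε)
    (f : H) (a δ : ℝ) (ha : 0 < a) (hδ0 : 0 < δ) (hδ1 : δ < 1)
    (hstable : ∃ z : EuclideanSpace ℂ (Fin N),
      ‖f - T z‖ ≤ δ * ‖f‖ ∧ ‖z‖ ≤ a * ‖f‖) :
    ‖f - ∑ n ∈ Finset.univ.filter (fun n => ε < σ n),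
        (⟪ξ n, f⟫ / (σ n : ℂ)) • ξ n‖ ≤
      (δ + a * Real.sqrt ε) * ‖f‖ :=
  stmt_14_general φ σ v hv G hG heig T hT ξ hξ ε hε f a δ hstable
end

section
/- For the ASVD2 method with Λ the largest subset of {n : σₙ > ε} satisfying Σ_{n∈Λ}|⟨y,vₙ⟩|²/σₙ² ≤ c²‖y‖², the error satisfies ‖f − P_Λ f‖ ≤ ‖f − T_N z‖ + max{√ε, ‖f − T_N z‖/(c‖y‖ − (1/√ε)‖f − T_N z‖ − 2‖z‖)} ‖z‖ for every z ∈ ℂᴺ with (1/√ε)‖f − T_N z‖ + 2‖z‖ < c‖y‖. -/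
/-!
Write `ξₙ = T vₙ`: these are pairwise orthogonal with `‖ξₙ‖² = σₙ`, and `P_Λ f` is the best
approximation of `f` from their span. Since `⟨vₙ, y⟩ = ⟨ξₙ, f - T z⟩ + σₙ ⟨vₙ, z⟩`, Bessel's
inequality bounds the budget sum over all of `{σₙ > ε}` by `(‖f - T z‖ / √ε + ‖z‖)²`, which the
hypothesis on `z` puts below `c² ‖y‖²`. So the maximal admissible `Λ` is all of `{σₙ > ε}`, and
comparing `P_Λ f` with `∑_{n ∈ Λ} ⟨vₙ, z⟩ ξₙ` leaves `‖f - T z‖` plus the tail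
`∑_{σₙ ≤ ε} ⟨vₙ, z⟩ ξₙ`, whose norm is at most `√ε ‖z‖`.
-/

open Finset
open scoped InnerProductSpace

section WeightedOrthogonal

variable {𝕜 E ι : Type*} [RCLike 𝕜] [NormedAddCommGroup E] [InnerProductSpace 𝕜 E]
  [DecidableEq ι] {ξ : ι → E} {σ : ι → ℝ}

theorem inner_sum_smul_of_inner_eq_ite
    (hξ : ∀ m n, ⟪ξ m, ξ n⟫_𝕜 = if m = n then (σ m : 𝕜) else 0)
    {s : Finset ι} {m : ι} (hm : m ∈ s) (c : ι → 𝕜) :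
    ⟪ξ m, ∑ n ∈ s, c n • ξ n⟫_𝕜 = σ m * c m := by
  rw [inner_sum, sum_eq_single_of_mem m hm]
  · rw [inner_smul_right, hξ, if_pos rfl, mul_comm]
  · intro n _ hne
    rw [inner_smul_right, hξ, if_neg (Ne.symm hne), mul_zero]

theorem norm_sq_sum_smul_of_inner_eq_ite
    (hξ : ∀ m n, ⟪ξ m, ξ n⟫_𝕜 = if m = n then (σ m : 𝕜) else 0)
    (s : Finset ι) (c : ι → 𝕜) :
    ‖∑ n ∈ s, c n • ξ n‖ ^ 2 = ∑ n ∈ s, σ n * ‖c n‖ ^ 2 := by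
  rw [@norm_sq_eq_re_inner 𝕜, sum_inner, map_sum]
  refine sum_congr rfl fun n hn => ?_
  rw [inner_smul_left, inner_sum_smul_of_inner_eq_ite hξ hn, mul_left_comm, RCLike.conj_mul]
  norm_cast

theorem inner_sub_sum_div_smul_eq_zero
    (hξ : ∀ m n, ⟪ξ m, ξ n⟫_𝕜 = if m = n then (σ m : 𝕜) else 0)
    {s : Finset ι} {m : ι} (hm : m ∈ s) (hσ : σ m ≠ 0) (f : E) :
    ⟪ξ m, f - ∑ n ∈ s, (⟪ξ n, f⟫_𝕜 / σ n) • ξ n⟫_𝕜 = 0 := by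
  rw [inner_sub_right, inner_sum_smul_of_inner_eq_ite hξ hm,
    mul_div_cancel₀ _ (RCLike.ofReal_ne_zero.2 hσ), sub_self]

theorem norm_sub_sum_smul_sq_eq
    (hξ : ∀ m n, ⟪ξ m, ξ n⟫_𝕜 = if m = n then (σ m : 𝕜) else 0)
    {s : Finset ι} (hσ : ∀ n ∈ s, σ n ≠ 0) (f : E) (c : ι → 𝕜) :
    ‖f - ∑ n ∈ s, c n • ξ n‖ ^ 2 = ‖f - ∑ n ∈ s, (⟪ξ n, f⟫_𝕜 / σ n) • ξ n‖ ^ 2 +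
      ‖∑ n ∈ s, (⟪ξ n, f⟫_𝕜 / σ n - c n) • ξ n‖ ^ 2 := by
  have hsplit : f - ∑ n ∈ s, c n • ξ n = (f - ∑ n ∈ s, (⟪ξ n, f⟫_𝕜 / σ n) • ξ n) +
      ∑ n ∈ s, (⟪ξ n, f⟫_𝕜 / σ n - c n) • ξ n := by
    simp only [sub_smul, sum_sub_distrib]
    abel
  have horth : ⟪f - ∑ n ∈ s, (⟪ξ n, f⟫_𝕜 / σ n) • ξ n,
      ∑ n ∈ s, (⟪ξ n, f⟫_𝕜 / σ n - c n) • ξ n⟫_𝕜 = 0 := by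
    rw [inner_eq_zero_symm, sum_inner]
    exact sum_eq_zero fun n hn => by
      rw [inner_smul_left, inner_sub_sum_div_smul_eq_zero hξ hn (hσ n hn), mul_zero]
  rw [hsplit, @norm_add_sq 𝕜, horth, map_zero, mul_zero, add_zero]

theorem norm_sub_sum_div_smul_le
    (hξ : ∀ m n, ⟪ξ m, ξ n⟫_𝕜 = if m = n then (σ m : 𝕜) else 0)
    {s : Finset ι} (hσ : ∀ n ∈ s, σ n ≠ 0) (f : E) (c : ι → 𝕜) :
    ‖f - ∑ n ∈ s, (⟪ξ n, f⟫_𝕜 / σ n) • ξ n‖ ≤ ‖f - ∑ n ∈ s, c n • ξ n‖ := by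
  refine (pow_le_pow_iff_left₀ (norm_nonneg _) (norm_nonneg _) two_ne_zero).1 ?_
  rw [norm_sub_sum_smul_sq_eq hξ hσ f c]
  exact le_add_of_nonneg_right (sq_nonneg _)

theorem sum_norm_inner_sq_div_le
    (hξ : ∀ m n, ⟪ξ m, ξ n⟫_𝕜 = if m = n then (σ m : 𝕜) else 0)
    {s : Finset ι} (hσ : ∀ n ∈ s, 0 < σ n) (f : E) :
    ∑ n ∈ s, ‖⟪ξ n, f⟫_𝕜‖ ^ 2 / σ n ≤ ‖f‖ ^ 2 := by
  have h := norm_sub_sum_smul_sq_eq hξ (fun n hn => (hσ n hn).ne') f 0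
  simp only [Pi.zero_apply, zero_smul, sum_const_zero, sub_zero,
    norm_sq_sum_smul_of_inner_eq_ite hξ] at h
  calc ∑ n ∈ s, ‖⟪ξ n, f⟫_𝕜‖ ^ 2 / σ n = ∑ n ∈ s, σ n * ‖⟪ξ n, f⟫_𝕜 / σ n‖ ^ 2 := by
        refine sum_congr rfl fun n hn => ?_
        rw [norm_div, RCLike.norm_ofReal, abs_of_pos (hσ n hn)]
        field_simp
    _ ≤ ‖f‖ ^ 2 := by rw [h]; exact le_add_of_nonneg_left (sq_nonneg _)

end WeightedOrthogonal

section OrthonormalCoefficients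

variable {𝕜 E F ι : Type*} [RCLike 𝕜] [NormedAddCommGroup E] [InnerProductSpace 𝕜 E]
  [NormedAddCommGroup F] [InnerProductSpace 𝕜 F] [DecidableEq ι] {ξ : ι → E} {σ : ι → ℝ}
  {v : ι → F}

theorem sum_norm_inner_sq_div_sq_le (hv : Orthonormal 𝕜 v)
    (hξ : ∀ m n, ⟪ξ m, ξ n⟫_𝕜 = if m = n then (σ m : 𝕜) else 0)
    {s : Finset ι} {ε : ℝ} (hε : 0 < ε) (hσ : ∀ n ∈ s, ε < σ n) {g : E} {y z : F}
    (hy : ∀ n ∈ s, ⟪v n, y⟫_𝕜 = ⟪ξ n, g⟫_𝕜 + σ n * ⟪v n, z⟫_𝕜) :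
    ∑ n ∈ s, ‖⟪v n, y⟫_𝕜‖ ^ 2 / σ n ^ 2 ≤ (‖g‖ / √ε + ‖z‖) ^ 2 := by
  have hv' : ∀ m n, ⟪v m, v n⟫_𝕜 = if m = n then ((1 : ℝ) : 𝕜) else 0 := by
    simpa using orthonormal_iff_ite.1 hv
  have hnorm (c : ι → 𝕜) : ‖∑ n ∈ s, c n • v n‖ ^ 2 = ∑ n ∈ s, ‖c n‖ ^ 2 := by
    simp only [norm_sq_sum_smul_of_inner_eq_ite hv', one_mul]
  have hg : ‖∑ n ∈ s, (⟪ξ n, g⟫_𝕜 / σ n) • v n‖ ≤ ‖g‖ / √ε := by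
    refine (pow_le_pow_iff_left₀ (norm_nonneg _) (by positivity) two_ne_zero).1 ?_
    rw [hnorm, div_pow, Real.sq_sqrt hε.le]
    calc ∑ n ∈ s, ‖⟪ξ n, g⟫_𝕜 / σ n‖ ^ 2 ≤ ∑ n ∈ s, ‖⟪ξ n, g⟫_𝕜‖ ^ 2 / σ n / ε := by
          refine sum_le_sum fun n hn => ?_
          have hσn : 0 < σ n := hε.trans (hσ n hn)
          rw [norm_div, RCLike.norm_ofReal, abs_of_pos hσn, div_pow, sq (σ n), ← div_div]
          exact div_le_div_of_nonneg_left (by positivity) hε (hσ n hn).le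
      _ ≤ ‖g‖ ^ 2 / ε := by
          rw [← sum_div]
          exact div_le_div_of_nonneg_right
            (sum_norm_inner_sq_div_le hξ (fun n hn => hε.trans (hσ n hn)) g) hε.le
  have hz : ‖∑ n ∈ s, ⟪v n, z⟫_𝕜 • v n‖ ≤ ‖z‖ :=
    (pow_le_pow_iff_left₀ (norm_nonneg _) (norm_nonneg _) two_ne_zero).1
      ((hnorm _).trans_le (hv.sum_inner_products_le z))
  have hcoef : ∀ n ∈ s, ‖⟪v n, y⟫_𝕜‖ ^ 2 / σ n ^ 2 = ‖⟪ξ n, g⟫_𝕜 / σ n + ⟪v n, z⟫_𝕜‖ ^ 2 := by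
    intro n hn
    have hσn : (σ n : 𝕜) ≠ 0 := RCLike.ofReal_ne_zero.2 (hε.trans (hσ n hn)).ne'
    rw [div_add' _ _ _ hσn, mul_comm, ← hy n hn, norm_div, div_pow, RCLike.norm_ofReal, sq_abs]
  rw [sum_congr rfl hcoef, ← hnorm]
  simp only [add_smul, sum_add_distrib]
  exact pow_le_pow_left₀ (norm_nonneg _) ((norm_add_le _ _).trans (add_le_add hg hz)) 2

theorem norm_sum_inner_smul_le_of_le (hv : Orthonormal 𝕜 v)
    (hξ : ∀ m n, ⟪ξ m, ξ n⟫_𝕜 = if m = n then (σ m : 𝕜) else 0)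
    {t : Finset ι} {ε : ℝ} (hε : 0 ≤ ε) (hσ : ∀ n ∈ t, σ n ≤ ε) (z : F) :
    ‖∑ n ∈ t, ⟪v n, z⟫_𝕜 • ξ n‖ ≤ √ε * ‖z‖ := by
  refine (pow_le_pow_iff_left₀ (norm_nonneg _) (by positivity) two_ne_zero).1 ?_
  rw [norm_sq_sum_smul_of_inner_eq_ite hξ, mul_pow, Real.sq_sqrt hε]
  calc ∑ n ∈ t, σ n * ‖⟪v n, z⟫_𝕜‖ ^ 2 ≤ ∑ n ∈ t, ε * ‖⟪v n, z⟫_𝕜‖ ^ 2 :=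
        sum_le_sum fun n hn => mul_le_mul_of_nonneg_right (hσ n hn) (sq_nonneg _)
    _ ≤ ε * ‖z‖ ^ 2 := by
        rw [← mul_sum]
        exact mul_le_mul_of_nonneg_left (hv.sum_inner_products_le z) hε

end OrthonormalCoefficients

section Synthesis

variable {𝕜 H ι : Type*} [RCLike 𝕜] [NormedAddCommGroup H] [InnerProductSpace 𝕜 H] [Fintype ι]
  {φ : ι → H} {T : EuclideanSpace 𝕜 ι → H}

theorem inner_synthesis_eq_inner_analysis (hT : ∀ z, T z = ∑ n, z n • φ n) {f : H}
    {y : EuclideanSpace 𝕜 ι} (hy : ∀ n, y n = ⟪φ n, f⟫_𝕜) (u : EuclideanSpace 𝕜 ι) :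
    ⟪T u, f⟫_𝕜 = ⟪u, y⟫_𝕜 := by
  rw [hT, sum_inner, PiLp.inner_apply]
  refine sum_congr rfl fun n _ => ?_
  rw [inner_smul_left, hy, RCLike.inner_apply, mul_comm]

theorem inner_synthesis_eigenvector {G : Matrix ι ι 𝕜} (hG : ∀ m k, G m k = ⟪φ m, φ k⟫_𝕜)
    (hT : ∀ z, T z = ∑ n, z n • φ n) {w : EuclideanSpace 𝕜 ι} {μ : ℝ}
    (hw : ∀ i, G.mulVec (fun j => w j) i = (μ : 𝕜) * w i) (u : EuclideanSpace 𝕜 ι) :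
    ⟪T u, T w⟫_𝕜 = μ * ⟪u, w⟫_𝕜 := by
  rw [← inner_smul_right]
  refine inner_synthesis_eq_inner_analysis hT (fun k => ?_) u
  rw [PiLp.smul_apply, smul_eq_mul, ← hw, hT, inner_sum, Matrix.mulVec, dotProduct]
  refine sum_congr rfl fun j _ => ?_
  rw [inner_smul_right, hG, mul_comm]

theorem inner_synthesis_orthonormal_eigenvectors [DecidableEq ι] {G : Matrix ι ι 𝕜}
    (hG : ∀ m k, G m k = ⟪φ m, φ k⟫_𝕜) (hT : ∀ z, T z = ∑ n, z n • φ n) {σ : ι → ℝ}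
    {v : ι → EuclideanSpace 𝕜 ι} (hv : Orthonormal 𝕜 v)
    (heig : ∀ n i, G.mulVec (fun j => v n j) i = (σ n : 𝕜) * v n i) (m n : ι) :
    ⟪T (v m), T (v n)⟫_𝕜 = if m = n then (σ m : 𝕜) else 0 := by
  rw [inner_synthesis_eigenvector hG hT (heig n), orthonormal_iff_ite.1 hv]
  split_ifs with h
  · rw [h, mul_one]
  · rw [mul_zero]

theorem synthesis_eq_sum_inner_smul (hT : ∀ z, T z = ∑ n, z n • φ n)
    {v : ι → EuclideanSpace 𝕜 ι} (hv : Orthonormal 𝕜 v) (w : EuclideanSpace 𝕜 ι) :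
    T w = ∑ n, ⟪v n, w⟫_𝕜 • T (v n) := by
  have hspan : ⊤ ≤ Submodule.span 𝕜 (Set.range v) :=
    (hv.linearIndependent.span_eq_top_of_card_eq_finrank' (by simp)).ge
  conv_lhs => rw [← (OrthonormalBasis.mk hv hspan).sum_repr' w]
  simp only [OrthonormalBasis.coe_mk, hT, WithLp.ofLp_sum, WithLp.ofLp_smul, Finset.sum_apply,
    Pi.smul_apply, smul_eq_mul, sum_smul, mul_smul, smul_sum]
  exact sum_comm

theorem inner_synthesis_sub_synthesis {G : Matrix ι ι 𝕜} (hG : ∀ m k, G m k = ⟪φ m, φ k⟫_𝕜)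
    (hT : ∀ z, T z = ∑ n, z n • φ n) {w : EuclideanSpace 𝕜 ι} {μ : ℝ}
    (hw : ∀ i, G.mulVec (fun j => w j) i = (μ : 𝕜) * w i) {f : H}
    {y : EuclideanSpace 𝕜 ι} (hy : ∀ n, y n = ⟪φ n, f⟫_𝕜) (z : EuclideanSpace 𝕜 ι) :
    ⟪T w, f - T z⟫_𝕜 = ⟪w, y⟫_𝕜 - μ * ⟪w, z⟫_𝕜 := by
  rw [inner_sub_right, inner_synthesis_eq_inner_analysis hT hy, ← inner_conj_symm (T w),
    inner_synthesis_eigenvector hG hT hw, map_mul, RCLike.conj_ofReal, inner_conj_symm]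

end Synthesis

open scoped ComplexInnerProductSpace

theorem stmt_17_general {H : Type*} [NormedAddCommGroup H] [InnerProductSpace ℂ H]
    {N : ℕ} (φ : Fin N → H) (σ : Fin N → ℝ)
    (v : Fin N → EuclideanSpace ℂ (Fin N)) (hv : Orthonormal ℂ v)
    (G : Matrix (Fin N) (Fin N) ℂ) (hG : ∀ m k, G m k = ⟪φ m, φ k⟫)
    (heig : ∀ n i, G.mulVec (fun j => v n j) i = (σ n : ℂ) * v n i)
    (T : EuclideanSpace ℂ (Fin N) → H) (hT : ∀ z, T z = ∑ n, z n • φ n)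
    (ξ : Fin N → H) (hξ : ∀ n, ξ n = T (v n))
    (ε c : ℝ) (hε : 0 < ε)
    (f : H) (y : EuclideanSpace ℂ (Fin N)) (hy : ∀ n, y n = ⟪φ n, f⟫)
    (Λ : Finset (Fin N))
    (hΛsub : Λ ⊆ Finset.univ.filter (fun n => ε < σ n))
    (hΛmax : ∀ Λ' : Finset (Fin N), Λ' ⊆ Finset.univ.filter (fun n => ε < σ n) →
      (∑ n ∈ Λ', ‖⟪v n, y⟫‖ ^ 2 / (σ n) ^ 2 ≤ c ^ 2 * ‖y‖ ^ 2) → Λ'.card ≤ Λ.card)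
    (z : EuclideanSpace ℂ (Fin N))
    (hz : (1 / Real.sqrt ε) * ‖f - T z‖ + 2 * ‖z‖ < c * ‖y‖) :
    ‖f - ∑ n ∈ Λ, (⟪ξ n, f⟫ / (σ n : ℂ)) • ξ n‖ ≤
      ‖f - T z‖ +
        max (Real.sqrt ε)
          (‖f - T z‖ / (c * ‖y‖ - (1 / Real.sqrt ε) * ‖f - T z‖ - 2 * ‖z‖)) * ‖z‖ := by
  set S := Finset.univ.filter (fun n => ε < σ n)
  have hσS : ∀ n ∈ S, ε < σ n := fun n hn => (mem_filter.1 hn).2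
  have hξξ : ∀ m n, ⟪ξ m, ξ n⟫ = if m = n then (σ m : ℂ) else 0 := fun m n => by
    rw [hξ, hξ]; exact inner_synthesis_orthonormal_eigenvectors hG hT hv heig m n
  have hTz : T z = ∑ n, ⟪v n, z⟫ • ξ n := by
    simpa only [hξ] using synthesis_eq_sum_inner_smul hT hv z
  have hS : ∑ n ∈ S, ‖⟪v n, y⟫‖ ^ 2 / σ n ^ 2 ≤ c ^ 2 * ‖y‖ ^ 2 := by
    refine (sum_norm_inner_sq_div_sq_le hv hξξ hε hσS (g := f - T z) (z := z)
      fun n _ => ?_).trans ?_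
    · rw [hξ, inner_synthesis_sub_synthesis hG hT (heig n) hy z, sub_add_cancel]
    · rw [← mul_pow, div_eq_inv_mul, ← one_div]
      exact pow_le_pow_left₀ (by positivity) (by linarith [norm_nonneg z]) 2
  have hΛS : Λ = S := eq_of_subset_of_card_le hΛsub (hΛmax S subset_rfl hS)
  have htail : ‖∑ n ∈ univ \ Λ, ⟪v n, z⟫ • ξ n‖ ≤ √ε * ‖z‖ :=
    norm_sum_inner_smul_le_of_le hv hξξ hε.le (fun n hn => by simpa [hΛS, S] using hn) z
  calc ‖f - ∑ n ∈ Λ, (⟪ξ n, f⟫ / (σ n : ℂ)) • ξ n‖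
      ≤ ‖f - ∑ n ∈ Λ, ⟪v n, z⟫ • ξ n‖ :=
        norm_sub_sum_div_smul_le hξξ (fun n hn => (hε.trans (hσS n (hΛS ▸ hn))).ne') f _
    _ = ‖(f - T z) + ∑ n ∈ univ \ Λ, ⟪v n, z⟫ • ξ n‖ := by
        rw [hTz, ← sum_sdiff (subset_univ Λ)]; abel_nf
    _ ≤ ‖f - T z‖ + √ε * ‖z‖ := (norm_add_le _ _).trans (by gcongr)
    _ ≤ _ := by gcongr; exact le_max_left _ _

theorem stmt_17 {H : Type*} [NormedAddCommGroup H] [InnerProductSpace ℂ H]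
    {N : ℕ} (φ : Fin N → H) (σ : Fin N → ℝ)
    (v : Fin N → EuclideanSpace ℂ (Fin N)) (hv : Orthonormal ℂ v)
    (G : Matrix (Fin N) (Fin N) ℂ) (hG : ∀ m k, G m k = ⟪φ m, φ k⟫)
    (heig : ∀ n i, G.mulVec (fun j => v n j) i = (σ n : ℂ) * v n i)
    (T : EuclideanSpace ℂ (Fin N) → H) (hT : ∀ z, T z = ∑ n, z n • φ n)
    (ξ : Fin N → H) (hξ : ∀ n, ξ n = T (v n))
    (hσ : ∀ n, 0 ≤ σ n) (ε c : ℝ) (hε : 0 < ε) (hc : 0 < c)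
    (f : H) (y : EuclideanSpace ℂ (Fin N)) (hy : ∀ n, y n = ⟪φ n, f⟫)
    (Λ : Finset (Fin N))
    (hΛsub : Λ ⊆ Finset.univ.filter (fun n => ε < σ n))
    (hΛbd : ∑ n ∈ Λ, ‖⟪v n, y⟫‖ ^ 2 / (σ n) ^ 2 ≤ c ^ 2 * ‖y‖ ^ 2)
    (hΛmax : ∀ Λ' : Finset (Fin N), Λ' ⊆ Finset.univ.filter (fun n => ε < σ n) →
      (∑ n ∈ Λ', ‖⟪v n, y⟫‖ ^ 2 / (σ n) ^ 2 ≤ c ^ 2 * ‖y‖ ^ 2) → Λ'.card ≤ Λ.card)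
    (z : EuclideanSpace ℂ (Fin N))
    (hz : (1 / Real.sqrt ε) * ‖f - T z‖ + 2 * ‖z‖ < c * ‖y‖) :
    ‖f - ∑ n ∈ Λ, (⟪ξ n, f⟫ / (σ n : ℂ)) • ξ n‖ ≤
      ‖f - T z‖ +
        max (Real.sqrt ε)
          (‖f - T z‖ / (c * ‖y‖ - (1 / Real.sqrt ε) * ‖f - T z‖ - 2 * ‖z‖)) * ‖z‖ :=
  stmt_17_general φ σ v hv G hG heig T hT ξ hξ ε c hε f y hy Λ hΛsub hΛmax z hz
end
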